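/- arXiv:1408.1435 — 4 statements merged into one kernel-verified Lean document; each statement's English description precedes it below -/
import Mathlib

section
/- Suppose there exists a constant K ∈ ℕ, K ≥ 1, such that every non-negative integer m can be written as m = a₁² + a₂² + a₃² + a₄² where each aᵢ is a non-negative integer satisfying aᵢ = 0 or aᵢ² ≥ m/K². Then for every positive integer n, every integer M ≥ K²n² is expressible as a finite sum of squares of integers ≥ n. -/
def InGamma (n m : ℕ) : Prop :=
  ∃ l : Multiset ℕ, (∀ x ∈ l, n ≤ x) ∧ (l.map (· ^ 2)).sum = m

theorem inGamma_sum_sq {ι : Type*} [Fintype ι] {n : ℕ} (a : ι → ℕ)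
    (ha : ∀ i, a i = 0 ∨ n ≤ a i) : InGamma n (∑ i, a i ^ 2) := by
  classical
  refine ⟨((Finset.univ.filter fun i => a i ≠ 0).val.map a), ?_, ?_⟩
  · simp only [Multiset.mem_map, Finset.mem_val, Finset.mem_filter, Finset.mem_univ, true_and]
    rintro _ ⟨i, hi, rfl⟩
    exact (ha i).resolve_left hi
  · rw [Multiset.map_map]
    exact Finset.sum_filter_of_ne fun i _ hi => by simpa using hi

theorem le_of_sq_mul_le_sq_mul {K n a M : ℕ} (hK : 0 < K) (hn : K ^ 2 * n ^ 2 ≤ M)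
    (ha : M ≤ K ^ 2 * a ^ 2) : n ≤ a :=
  (Nat.pow_le_pow_iff_left two_ne_zero).mp <|
    Nat.le_of_mul_le_mul_left (hn.trans ha) (by positivity)

theorem four_large_squares_implies_gamma (K : ℕ) (hK : 1 ≤ K)
    (hfour : ∀ m : ℕ, ∃ a : Fin 4 → ℕ,
      (∑ i, (a i) ^ 2 = m) ∧ ∀ i, a i = 0 ∨ m ≤ K ^ 2 * (a i) ^ 2) :
    ∀ n : ℕ, 0 < n → ∀ M : ℕ, K ^ 2 * n ^ 2 ≤ M → InGamma n M := by
  intro n _ M hM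
  obtain ⟨a, rfl, hlarge⟩ := hfour M
  exact inGamma_sum_sq a fun i => (hlarge i).imp_right (le_of_sq_mul_le_sq_mul hK hM)
end

section
/- Let K be a positive real number and n a positive even integer. Then n has a representation n = a₁² + a₂² + a₃² + a₄² with non-negative integers aᵢ, each either 0 or satisfying K²aᵢ² ≥ n, if and only if 4n has such a representation (with the bound K²bᵢ² ≥ 4n for nonzero bᵢ). -/
/-- `m` has a four-square representation with all nonzero parts at least `√m / K`. -/
def LargeSquares (K : ℝ) (m : ℕ) : Prop :=
  ∃ a : Fin 4 → ℕ, (∑ i, (a i) ^ 2 = m) ∧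
    ∀ i, a i = 0 ∨ (m : ℝ) ≤ K ^ 2 * (a i : ℝ) ^ 2

lemma Nat.sq_mod_eight_cases (b : ℕ) :
    (b % 2 = 1 ∧ b ^ 2 % 8 = 1) ∨ (b % 2 = 0 ∧ (b ^ 2 % 8 = 0 ∨ b ^ 2 % 8 = 4)) := by
  rw [Nat.pow_mod, ← Nat.mod_mod_of_dvd b (by norm_num : 2 ∣ 8)]
  have : b % 8 < 8 := Nat.mod_lt _ (by norm_num)
  interval_cases b % 8 <;> simp

/-- Odd squares are `1` and even squares `0` or `4` modulo `8`, so a sum of four squares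
divisible by `8` has either no odd term or four of them, and four give `4` modulo `8`. -/
lemma two_dvd_of_eight_dvd_sum_four_sq (b : Fin 4 → ℕ) (h : 8 ∣ ∑ i, b i ^ 2) (i : Fin 4) :
    2 ∣ b i := by
  rw [Fin.sum_univ_four] at h
  have h0 := Nat.sq_mod_eight_cases (b 0)
  have h1 := Nat.sq_mod_eight_cases (b 1)
  have h2 := Nat.sq_mod_eight_cases (b 2)
  have h3 := Nat.sq_mod_eight_cases (b 3)
  fin_cases i <;> simp only [Fin.zero_eta, Fin.mk_one, Fin.reduceFinMk] <;> omega

lemma sum_sq_two_mul {ι : Type*} [Fintype ι] (a : ι → ℕ) :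
    ∑ i, (2 * a i) ^ 2 = 4 * ∑ i, a i ^ 2 := by
  simp only [mul_pow, ← Finset.mul_sum]
  norm_num

lemma large_two_mul_iff (K : ℝ) (m x : ℕ) :
    (2 * x = 0 ∨ ((4 * m : ℕ) : ℝ) ≤ K ^ 2 * ((2 * x : ℕ) : ℝ) ^ 2) ↔
      (x = 0 ∨ (m : ℝ) ≤ K ^ 2 * (x : ℝ) ^ 2) := by
  push_cast
  refine or_congr (by omega) ⟨fun h => ?_, fun h => ?_⟩ <;> nlinarith

lemma LargeSquares.four_mul {K : ℝ} {m : ℕ} (h : LargeSquares K m) :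
    LargeSquares K (4 * m) := by
  obtain ⟨a, hsum, hlarge⟩ := h
  exact ⟨fun i => 2 * a i, by rw [sum_sq_two_mul, hsum],
    fun i => (large_two_mul_iff K m (a i)).2 (hlarge i)⟩

/-- A representation of `4 * m` with `m` even has only even parts, which can be halved. -/
lemma LargeSquares.of_four_mul {K : ℝ} {m : ℕ} (hm : Even m) (h : LargeSquares K (4 * m)) :
    LargeSquares K m := by
  obtain ⟨b, hsum, hlarge⟩ := h
  have h8 : 8 ∣ ∑ i, b i ^ 2 := by
    obtain ⟨k, rfl⟩ := hm
    exact hsum ▸ ⟨k, by ring⟩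
  choose a ha using two_dvd_of_eight_dvd_sum_four_sq b h8
  obtain rfl : b = fun i => 2 * a i := funext ha
  refine ⟨a, ?_, fun i => (large_two_mul_iff K m (a i)).1 (hlarge i)⟩
  rw [sum_sq_two_mul] at hsum
  omega

theorem large_squares_iff_four_mul_general (K : ℝ) (n : ℕ)
    (hev : Even n) : LargeSquares K n ↔ LargeSquares K (4 * n) :=
  ⟨LargeSquares.four_mul, LargeSquares.of_four_mul hev⟩

theorem large_squares_iff_four_mul (K : ℝ) (hK : 0 < K) (n : ℕ) (hn : 0 < n)
    (hev : Even n) : LargeSquares K n ↔ LargeSquares K (4 * n) :=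
  large_squares_iff_four_mul_general K n hev
end

section
/- For every α ∈ ℕ, the number 4^α · 2 cannot be written as a sum of four nonzero integer squares. -/
/-! Squares are `0`, `1` or `4` modulo `8`, so a sum of four squares divisible by `8` has only even
terms. Halving all four terms divides the sum by `4`, which descends from `4 ^ (α + 1) * 2` to
`4 ^ α * 2` while keeping the terms nonzero; at `α = 0` the sum `2` is smaller than the `4` that
four nonzero squares must reach. -/

theorem ZMod.four_mul_eq_zero_of_sum_four_sq_eq_zero :
    ∀ x y z w : ZMod 8, x ^ 2 + y ^ 2 + z ^ 2 + w ^ 2 = 0 →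
      4 * x = 0 ∧ 4 * y = 0 ∧ 4 * z = 0 ∧ 4 * w = 0 := by
  decide

theorem Int.two_dvd_of_four_mul_cast_eq_zero {a : ℤ} (h : ((4 * a : ℤ) : ZMod 8) = 0) : 2 ∣ a :=
  Int.dvd_of_mul_dvd_mul_left (by norm_num) ((ZMod.intCast_zmod_eq_zero_iff_dvd _ 8).mp h)

theorem Int.two_dvd_of_eight_dvd_sum_four_sq {a b c d : ℤ}
    (h : 8 ∣ a ^ 2 + b ^ 2 + c ^ 2 + d ^ 2) : 2 ∣ a ∧ 2 ∣ b ∧ 2 ∣ c ∧ 2 ∣ d := by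
  have h8 := (ZMod.intCast_zmod_eq_zero_iff_dvd _ 8).mpr h
  push_cast at h8
  obtain ⟨ha, hb, hc, hd⟩ := ZMod.four_mul_eq_zero_of_sum_four_sq_eq_zero _ _ _ _ h8
  refine ⟨?_, ?_, ?_, ?_⟩ <;> apply Int.two_dvd_of_four_mul_cast_eq_zero <;> push_cast <;>
    assumption

theorem Int.four_le_sum_four_sq {a b c d : ℤ} (ha : a ≠ 0) (hb : b ≠ 0) (hc : c ≠ 0)
    (hd : d ≠ 0) : 4 ≤ a ^ 2 + b ^ 2 + c ^ 2 + d ^ 2 := by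
  linarith [sq_pos_of_ne_zero ha, sq_pos_of_ne_zero hb, sq_pos_of_ne_zero hc,
    sq_pos_of_ne_zero hd]

theorem four_pow_mul_two_not_sum_four_nonzero_squares (α : ℕ) :
    ¬ ∃ a₁ a₂ a₃ a₄ : ℤ, a₁ ≠ 0 ∧ a₂ ≠ 0 ∧ a₃ ≠ 0 ∧ a₄ ≠ 0 ∧
      a₁ ^ 2 + a₂ ^ 2 + a₃ ^ 2 + a₄ ^ 2 = (4 : ℤ) ^ α * 2 := by
  induction α with
  | zero =>
    rintro ⟨a₁, a₂, a₃, a₄, h₁, h₂, h₃, h₄, hsum⟩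
    have := Int.four_le_sum_four_sq h₁ h₂ h₃ h₄
    simp only [pow_zero, one_mul] at hsum
    omega
  | succ n ih =>
    rintro ⟨a₁, a₂, a₃, a₄, h₁, h₂, h₃, h₄, hsum⟩
    have hdvd : 8 ∣ a₁ ^ 2 + a₂ ^ 2 + a₃ ^ 2 + a₄ ^ 2 := ⟨4 ^ n, by rw [hsum, pow_succ]; ring⟩
    obtain ⟨⟨b₁, rfl⟩, ⟨b₂, rfl⟩, ⟨b₃, rfl⟩, ⟨b₄, rfl⟩⟩ := Int.two_dvd_of_eight_dvd_sum_four_sq hdvd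
    refine ih ⟨b₁, b₂, b₃, b₄, right_ne_zero_of_mul h₁, right_ne_zero_of_mul h₂,
      right_ne_zero_of_mul h₃, right_ne_zero_of_mul h₄, ?_⟩
    rw [pow_succ (4 : ℤ) n] at hsum
    linarith
end

section
/- Suppose there exists a positive constant K such that every squarefree positive integer q admits integers a₁,a₂,a₃,a₄ with a₁²+a₂²+a₃²+a₄² = q and each aᵢ = 0 or K²aᵢ² ≥ q. Then for every positive integer n, F(Γ_n) < K²n², where F(Γ_n) is the largest non-negative integer not expressible as a finite sum of squares of integers ≥ n. -/
theorem InGamma.sum_sq {ι : Type*} {n : ℕ} (s : Finset ι) (f : ι → ℕ)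
    (hf : ∀ i ∈ s, f i ≠ 0 → n ≤ f i) : InGamma n (∑ i ∈ s, f i ^ 2) := by
  refine ⟨(s.filter (f · ≠ 0)).val.map f, ?_, ?_⟩
  · simp only [Multiset.mem_map, Finset.mem_val, Finset.mem_filter]
    rintro _ ⟨i, ⟨his, hi⟩, rfl⟩
    exact hf i his hi
  · rw [Multiset.map_map]
    refine (Finset.sum_filter_of_ne fun i _ hi => ?_ : ∑ i ∈ s with f i ≠ 0, f i ^ 2 = _)
    exact fun h => hi (by simp [h])

theorem le_mul_of_sq_mul_le_sq_mul {K n b q c : ℕ} (hK : 0 < K)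
    (hm : K ^ 2 * n ^ 2 ≤ b ^ 2 * q) (hq : q ≤ K ^ 2 * c ^ 2) : n ≤ b * c := by
  have : K ^ 2 * n ^ 2 ≤ K ^ 2 * (b * c) ^ 2 :=
    calc K ^ 2 * n ^ 2 ≤ b ^ 2 * q := hm
      _ ≤ b ^ 2 * (K ^ 2 * c ^ 2) := Nat.mul_le_mul_left _ hq
      _ = K ^ 2 * (b * c) ^ 2 := by ring
  exact (Nat.pow_le_pow_iff_left two_ne_zero).mp (Nat.le_of_mul_le_mul_left this (by positivity))

theorem frobenius_bound_of_squarefree_large_squares (K : ℕ) (hK : 0 < K)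
    (hhyp : ∀ q : ℕ, 0 < q → Squarefree q → ∃ a : Fin 4 → ℤ,
      (∑ i, (a i) ^ 2 = (q : ℤ)) ∧ ∀ i, a i = 0 ∨ (q : ℤ) ≤ (K : ℤ) ^ 2 * (a i) ^ 2) :
    ∀ n : ℕ, 0 < n → ∀ m : ℕ, ¬ InGamma n m → m < K ^ 2 * n ^ 2 := by
  intro n _ m hm
  by_contra! hlarge
  obtain ⟨q, b, rfl, hq⟩ := Nat.sq_mul_squarefree m
  obtain ⟨a, hsum, ha⟩ := hhyp q (Nat.pos_of_ne_zero hq.ne_zero) hq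
  have hsum' : ∑ i, (a i).natAbs ^ 2 = q := by zify; simpa only [sq_abs] using hsum
  refine hm ?_
  have hscaled := InGamma.sum_sq (n := n) Finset.univ (fun i => b * (a i).natAbs) fun i _ hi => ?_
  · simpa only [mul_pow, ← Finset.mul_sum, hsum'] using hscaled
  · have hai : q ≤ K ^ 2 * (a i).natAbs ^ 2 := by
      zify; simpa only [sq_abs] using (ha i).resolve_left fun h => hi (by simp [h])
    exact le_mul_of_sq_mul_le_sq_mul hK hlarge hai
end
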